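/- For an Eulerian poset P of rank d, the polynomial H_Lef(P,t) := (1−t)^{−1}(G(P,t) − t^{d−1} G(P, t^{−1})) is a genuine polynomial of degree d−2 satisfying H_Lef(P,t) = t^{d−2} H_Lef(P, t^{−1}) and τ_{≤ (d−2)/2} H_Lef(P,t) = τ_{≤ (d−2)/2} H(P,t). -/

import Mathlib

open Finset Polynomial
open scoped Classical

/-- The defining recursion of the Möbius function of a finite poset. -/
def MobiusRec {P : Type*} [PartialOrder P] [Fintype P] (mu : P → P → ℤ) : Prop :=
  (∀ x : P, mu x x = 1) ∧
    ∀ x y : P, x < y → (∑ z : P, if x ≤ z ∧ z ≤ y then mu x z else 0) = 0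

/-- A finite poset with rank function `ρ` is Eulerian if its Möbius function satisfies
`μ(x,y) = (-1)^(ρ(y) - ρ(x))` for all `x ≤ y`. -/
def IsEulerian {P : Type*} [PartialOrder P] [Fintype P] (ρ : P → ℕ) : Prop :=
  ∀ mu : P → P → ℤ, MobiusRec mu → ∀ x y : P, x ≤ y → mu x y = (-1 : ℤ) ^ (ρ y - ρ x)

/-- `ρ` is a rank function of rank `d`: `ρ(⊥) = 0`, `ρ(⊤) = d`, `ρ` is monotone and
increases by one along covering relations. -/
def IsRankFunction {P : Type*} [PartialOrder P] [BoundedOrder P] (ρ : P → ℕ) (d : ℕ) : Prop :=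
  ρ ⊥ = 0 ∧ ρ ⊤ = d ∧ Monotone ρ ∧ ∀ x y : P, x ⋖ y → ρ y = ρ x + 1

/-- The truncation operator `τ_{< d/2}`, keeping only the terms of degree `< d/2`
(that is, `2*i < d`). -/
noncomputable def truncLtHalf (d : ℕ) (p : Polynomial ℤ) : Polynomial ℤ :=
  ∑ i ∈ Finset.range (p.natDegree + 1),
    if 2 * i < d then Polynomial.C (p.coeff i) * Polynomial.X ^ i else 0

/-- Stanley's polynomials `G([x,y],t)` and `H([x,y],t)` of the intervals of a finite graded
poset `P` with rank function `ρ`, given by the recursion: `G = H = 1` on rank-0 intervals,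
`H([x,y],t) = ∑_{x < z ≤ y} (t-1)^(ρ(z)-ρ(x)-1) G([z,y],t)`, and
`G([x,y],t) = τ_{< (ρ(y)-ρ(x))/2} ((1-t) H([x,y],t))`. -/
def GHSystem {P : Type*} [PartialOrder P] [Fintype P] (ρ : P → ℕ)
    (G H : P → P → Polynomial ℤ) : Prop :=
  (∀ x : P, G x x = 1 ∧ H x x = 1) ∧
  (∀ x y : P, x < y →
      H x y = ∑ z : P,
        if x < z ∧ z ≤ y then (Polynomial.X - 1) ^ (ρ z - ρ x - 1) * G z y else 0) ∧
  (∀ x y : P, x < y → G x y = truncLtHalf (ρ y - ρ x) ((1 - Polynomial.X) * H x y))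

/-- The truncation operator `τ_{≤ (d-2)/2}`, keeping only the terms of degree `i` with
`2*i ≤ d - 2`. -/
noncomputable def truncLeHalf (d2 : ℕ) (p : Polynomial ℤ) : Polynomial ℤ :=
  ∑ i ∈ Finset.range (p.natDegree + 1),
    if 2 * i ≤ d2 then Polynomial.C (p.coeff i) * Polynomial.X ^ i else 0

/-!
Write `h_i` for the coefficients of `H(P,t)`. Since `G(P,t)` has coefficient `h_i - h_{i-1}` in
each degree `i < d/2` and vanishes above, `G(t) - t^(d-1) G(t⁻¹)` is `(1-t)` times the palindrome
of degree `d-2` whose coefficients in degrees `≤ (d-2)/2` are `h_0, h_1, …`; this palindrome is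
`H_Lef(P,t)`. Its degree is exactly `d-2` because `h_0 = 1`: by induction every `G([x,y],t)` has
constant term `1`, and then the constant term of `H([x,y],t)` is `-∑_{x<z≤y} (-1)^(ρ(z)-ρ(x)) = 1`
by the Eulerian property.
-/

namespace Polynomial

variable {R : Type*}

theorem coeff_sum_range_ite_C_mul_X_pow [Semiring R] (p : R[X]) (s : ℕ → Prop)
    [DecidablePred s] (j : ℕ) :
    (∑ i ∈ range (p.natDegree + 1), if s i then C (p.coeff i) * X ^ i else 0).coeff j =
      if s j then p.coeff j else 0 := by
  simp only [finsetSum_coeff, apply_ite (coeff · j), coeff_C_mul_X_pow, coeff_zero]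
  rw [Finset.sum_eq_single j (fun i _ hij => by simp [Ne.symm hij])]
  · simp
  · intro hj
    simp [coeff_eq_zero_of_natDegree_lt (Nat.lt_of_succ_le (by simpa using hj))]

theorem coeff_one_sub_X_mul [Ring R] (p : R[X]) (j : ℕ) :
    ((1 - X) * p).coeff j = p.coeff j - if j = 0 then 0 else p.coeff (j - 1) := by
  cases j <;> simp [sub_mul, coeff_X_mul]

theorem revAt_eq_ite (N i : ℕ) : revAt N i = if i ≤ N then N - i else i := rfl

noncomputable def palindromize [Semiring R] (n : ℕ) (p : R[X]) : R[X] :=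
  ∑ j ∈ range (n + 1), C (p.coeff (min j (n - j))) * X ^ j

section Palindromize

variable [Semiring R] (n : ℕ)

theorem coeff_palindromize (p : R[X]) (j : ℕ) :
    (palindromize n p).coeff j = if j ≤ n then p.coeff (min j (n - j)) else 0 := by
  simp [palindromize, finsetSum_coeff]

theorem reflect_palindromize (p : R[X]) : (palindromize n p).reflect n = palindromize n p := by
  ext j
  rw [coeff_reflect, revAt_eq_ite]
  split_ifs with hj
  · rw [coeff_palindromize, coeff_palindromize, if_pos (Nat.sub_le n j), if_pos hj]
    congr 1
    omega
  · rfl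

theorem natDegree_palindromize {p : R[X]} (hp : p.coeff 0 ≠ 0) :
    (palindromize n p).natDegree = n := by
  refine natDegree_eq_of_le_of_coeff_ne_zero ?_ (by simpa [coeff_palindromize] using hp)
  rw [natDegree_le_iff_coeff_eq_zero]
  intro j hj
  rw [coeff_palindromize, if_neg (by exact_mod_cast hj.not_ge)]

end Palindromize

end Polynomial

theorem coeff_truncLtHalf (d : ℕ) (p : ℤ[X]) (j : ℕ) :
    (truncLtHalf d p).coeff j = if 2 * j < d then p.coeff j else 0 :=
  coeff_sum_range_ite_C_mul_X_pow p _ j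

theorem coeff_truncLeHalf (d2 : ℕ) (p : ℤ[X]) (j : ℕ) :
    (truncLeHalf d2 p).coeff j = if 2 * j ≤ d2 then p.coeff j else 0 :=
  coeff_sum_range_ite_C_mul_X_pow p _ j

theorem one_sub_X_mul_palindromize (n : ℕ) (p : ℤ[X]) :
    (1 - X) * palindromize n p =
      truncLtHalf (n + 2) ((1 - X) * p) - (truncLtHalf (n + 2) ((1 - X) * p)).reflect (n + 1) := by
  ext j
  simp only [coeff_one_sub_X_mul, coeff_palindromize, coeff_sub, coeff_reflect, revAt_eq_ite,
    coeff_truncLtHalf]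
  -- Below degree `(n + 1) / 2` only the first term on the right contributes, above it only the
  -- reflected one; in degree `(n + 1) / 2` (`n` odd) both sides vanish.
  grind

theorem truncLeHalf_palindromize (n : ℕ) (p : ℤ[X]) :
    truncLeHalf n (palindromize n p) = truncLeHalf n p := by
  ext j
  rw [coeff_truncLeHalf, coeff_truncLeHalf, coeff_palindromize]
  split_ifs with hj hjn
  · rw [min_eq_left (by omega)]
  · omega
  · rfl

theorem exists_mobiusRec (P : Type*) [PartialOrder P] [Fintype P] :
    ∃ mu : P → P → ℤ, MobiusRec mu := by
  let _ := Fintype.toLocallyFiniteOrder (α := P)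
  refine ⟨fun x y => IncidenceAlgebra.mu ℤ x y, fun x => IncidenceAlgebra.mu_self x,
    fun x y hxy => ?_⟩
  have hIcc := IncidenceAlgebra.sum_Icc_mu_right (𝕜 := ℤ) x y
  rw [if_neg hxy.ne] at hIcc
  rw [← Finset.sum_filter, ← hIcc]
  congr 1
  ext z
  simp

theorem IsEulerian.sum_Ioc_neg_one_pow {P : Type*} [PartialOrder P] [Fintype P] {ρ : P → ℕ}
    (hE : IsEulerian ρ) {x y : P} (hxy : x < y) :
    (∑ z : P, if x < z ∧ z ≤ y then (-1 : ℤ) ^ (ρ z - ρ x) else 0) = -1 := by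
  obtain ⟨mu, hmu⟩ := exists_mobiusRec P
  have hsplit : ∀ z, (if x ≤ z ∧ z ≤ y then mu x z else 0) =
      (if x = z then 1 else 0) + if x < z ∧ z ≤ y then (-1 : ℤ) ^ (ρ z - ρ x) else 0 := by
    intro z
    rcases eq_or_ne x z with rfl | hxz
    · simp [hmu.1, hxy.le]
    · simp only [hxz, if_false, zero_add, hxz.le_iff_lt]
      split_ifs with hz
      · exact hE mu hmu x z hz.1.le
      · rfl
  have hsum := hmu.2 x y hxy
  simp only [hsplit, Finset.sum_add_distrib, Finset.sum_ite_eq, Finset.mem_univ, if_true] at hsum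
  linarith

theorem IsRankFunction.strictMono {P : Type*} [PartialOrder P] [BoundedOrder P] [Fintype P]
    {ρ : P → ℕ} {d : ℕ} (hρ : IsRankFunction ρ d) : StrictMono ρ := by
  let _ := Fintype.toLocallyFiniteOrder (α := P)
  exact (strictMono_iff_forall_covBy ρ).2 fun x y hxy => by
    rw [hρ.2.2.2 x y hxy]
    exact Nat.lt_succ_self _

namespace GHSystem

variable {P : Type*} [PartialOrder P] [Fintype P] {ρ : P → ℕ} {G H : P → P → ℤ[X]}

theorem coeff_zero_H_of_coeff_zero_G (hGH : GHSystem ρ G H) (hρ : StrictMono ρ)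
    (hE : IsEulerian ρ) {x y : P} (hxy : x < y)
    (hG : ∀ z, x < z → z ≤ y → (G z y).coeff 0 = 1) : (H x y).coeff 0 = 1 := by
  have hterm : ∀ z, (if x < z ∧ z ≤ y then (X - 1) ^ (ρ z - ρ x - 1) * G z y else 0).coeff 0 =
      -if x < z ∧ z ≤ y then (-1 : ℤ) ^ (ρ z - ρ x) else 0 := by
    intro z
    split_ifs with hz
    · obtain ⟨k, hk⟩ := Nat.exists_eq_add_of_lt (hρ hz.1)
      rw [mul_coeff_zero, hG z hz.1 hz.2, coeff_zero_eq_eval_zero,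
        show ρ z - ρ x = k + 1 by omega]
      simp [pow_succ]
    · simp
  rw [hGH.2.1 x y hxy, finsetSum_coeff, Finset.sum_congr rfl fun z _ => hterm z,
    Finset.sum_neg_distrib, hE.sum_Ioc_neg_one_pow hxy, neg_neg]

theorem coeff_zero_G (hGH : GHSystem ρ G H) (hρ : StrictMono ρ) (hE : IsEulerian ρ)
    {x y : P} (hxy : x ≤ y) : (G x y).coeff 0 = 1 := by
  induction x using WellFoundedGT.induction generalizing y with
  | _ x ih =>
    rcases hxy.eq_or_lt with rfl | hxy
    · simp [(hGH.1 x).1]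
    · have hH := hGH.coeff_zero_H_of_coeff_zero_G hρ hE hxy fun z hxz => ih z hxz
      rw [hGH.2.2 x y hxy, coeff_truncLtHalf, if_pos (by have := hρ hxy; omega),
        coeff_one_sub_X_mul, hH]
      simp

end GHSystem

/-- For an Eulerian poset `P` of rank `d ≥ 2`, the rational function
`H_Lef(P,t) := (1-t)⁻¹ (G(P,t) - t^(d-1) G(P,t⁻¹))` is a genuine polynomial `L` of degree
`d-2` satisfying `L(t) = t^(d-2) L(t⁻¹)` and `τ_{≤(d-2)/2} L = τ_{≤(d-2)/2} H(P,t)`. -/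
theorem H_Lef_exists {P : Type*} [PartialOrder P] [BoundedOrder P] [Fintype P]
    (ρ : P → ℕ) (d : ℕ) (hrk : IsRankFunction ρ d) (hE : IsEulerian ρ)
    (G H : P → P → Polynomial ℤ) (hGH : GHSystem ρ G H) (hd : 2 ≤ d) :
    ∃ L : Polynomial ℤ,
      (1 - Polynomial.X) * L = G ⊥ ⊤ - (G ⊥ ⊤).reflect (d - 1) ∧
      L.natDegree = d - 2 ∧
      L = L.reflect (d - 2) ∧
      truncLeHalf (d - 2) L = truncLeHalf (d - 2) (H ⊥ ⊤) := by
  obtain ⟨n, rfl⟩ : ∃ n, d = n + 2 := ⟨d - 2, by omega⟩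
  have hρ : StrictMono ρ := hrk.strictMono
  obtain ⟨hρbot, hρtop, -, -⟩ := hrk
  have hbt : (⊥ : P) < ⊤ := lt_top_iff_ne_top.2 fun h => by
    rw [h, hρtop] at hρbot
    omega
  have hG : G ⊥ ⊤ = truncLtHalf (n + 2) ((1 - X) * H ⊥ ⊤) := by
    rw [hGH.2.2 ⊥ ⊤ hbt, hρbot, hρtop, Nat.sub_zero]
  have hH : (H ⊥ ⊤).coeff 0 = 1 :=
    hGH.coeff_zero_H_of_coeff_zero_G hρ hE hbt fun z _ hz => hGH.coeff_zero_G hρ hE hz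
  refine ⟨palindromize n (H ⊥ ⊤), ?_, ?_, ?_, ?_⟩
  · rw [hG]
    exact one_sub_X_mul_palindromize n _
  · exact natDegree_palindromize n (by simp [hH])
  · exact (reflect_palindromize n _).symm
  · exact truncLeHalf_palindromize n _
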